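/- Fix integers K and r with 1 ≤ r ≤ K. There exists a real K × K matrix B such that (i) every row k of B is supported on the r cyclically consecutive columns {k, k+1, …, k+r−1} (indices mod K), i.e., B k i = 0 whenever i is not among these columns, and (ii) for every subset W of row indices with |W| = K − r + 1, the all-ones row vector (1, 1, …, 1) lies in the real linear span of the rows of B indexed by W. -/

import Mathlib

/-!
Let `Z i` be the `K - r` rows whose window misses column `i`, and let column `i` of `B` list
the values `pᵢ(0), …, pᵢ(K - 1)` of a polynomial `pᵢ` of degree at most `K - r` that vanishes on
`Z i` and takes the value `1` at the extra node `K`. Then the support condition holds by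
construction. For any set `W` of `K - r + 1` rows, Lagrange interpolation at the nodes `W` writes
`p(K)` as one fixed linear combination `∑ k ∈ W, λₖ p(k)` valid for every `p` of degree at most
`K - r`; applied to every `pᵢ` at once, this combination of the rows in `W` is the all-ones vector.
-/

open Polynomial Finset

theorem Lagrange.eval_eq_sum_eval_basis_mul {F ι : Type*} [Field F] [DecidableEq ι]
    {s : Finset ι} {v : ι → F} (hvs : Set.InjOn v s) {p : F[X]} (hp : p.degree < #s) (x : F) :
    p.eval x = ∑ i ∈ s, (Lagrange.basis s v i).eval x * p.eval (v i) := by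
  conv_lhs => rw [Lagrange.eq_interpolate hvs hp, Lagrange.interpolate_apply]
  simp only [eval_finsetSum, eval_mul, eval_C, mul_comm]

theorem Lagrange.exists_eval_eq_zero_eval_eq_one {F : Type*} [Field F] [DecidableEq F]
    (Z : Finset F) {x : F} (hx : x ∉ Z) :
    ∃ p : F[X], p.degree ≤ #Z ∧ (∀ z ∈ Z, p.eval z = 0) ∧ p.eval x = 1 := by
  have hinj : Set.InjOn id (↑(insert x Z) : Set F) := Set.injOn_id _
  refine ⟨Lagrange.basis (insert x Z) id x, ?_, fun z hz => ?_, ?_⟩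
  · rw [Lagrange.degree_basis hinj (mem_insert_self x Z), card_insert_of_notMem hx]
    simp
  · exact Lagrange.eval_basis_of_ne (v := id) (ne_of_mem_of_not_mem hz hx).symm (mem_insert_of_mem hz)
  · exact Lagrange.eval_basis_self hinj (mem_insert_self x Z)

theorem one_mem_span_eval_rows {F ι κ : Type*} [Field F] [DecidableEq ι]
    {s : Finset ι} {v : ι → F} (hvs : Set.InjOn v s) {P : κ → F[X]}
    (hP : ∀ j, (P j).degree < #s) {x : F} (hx : ∀ j, (P j).eval x = 1) :
    (fun _ : κ => (1 : F)) ∈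
      Submodule.span F ((fun i j => (P j).eval (v i)) '' (s : Set ι)) := by
  have hone : (fun _ : κ => (1 : F)) =
      ∑ i ∈ s, (Lagrange.basis s v i).eval x • fun j => (P j).eval (v i) := by
    funext j
    rw [← hx j, Lagrange.eval_eq_sum_eval_basis_mul hvs (hP j) x]
    simp only [Finset.sum_apply, Pi.smul_apply, smul_eq_mul]
  rw [hone]
  exact Submodule.sum_smul_mem _ _ fun i hi => Submodule.subset_span ⟨i, hi, rfl⟩

theorem Nat.exists_mem_Ico_sub_mod_eq {K r k i : ℕ} (hk : k < K) (hi : i < K)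
    (h : ∀ t < r, i ≠ (k + t) % K) : ∃ a ∈ Ico r K, (i + K - a) % K = k := by
  refine ⟨(i + K - k) % K, ?_⟩
  rcases le_or_gt k i with hki | hki
  · have ha : (i + K - k) % K = i - k := by
      rw [show i + K - k = i - k + K by omega, Nat.add_mod_right, Nat.mod_eq_of_lt (by omega)]
    have hrk : r ≤ i - k := by
      by_contra! hlt
      exact h _ hlt (by rw [Nat.add_sub_cancel' hki, Nat.mod_eq_of_lt hi])
    rw [ha, mem_Ico, show i + K - (i - k) = k + K by omega, Nat.add_mod_right,
      Nat.mod_eq_of_lt hk]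
    omega
  · have ha : (i + K - k) % K = i + K - k := Nat.mod_eq_of_lt (by omega)
    have hrk : r ≤ i + K - k := by
      by_contra! hlt
      exact h _ hlt (by rw [show k + (i + K - k) = i + K by omega, Nat.add_mod_right,
        Nat.mod_eq_of_lt hi])
    rw [ha, mem_Ico, show i + K - (i + K - k) = k by omega, Nat.mod_eq_of_lt hk]
    omega

theorem stmt_2_general (K r : ℕ) :
    ∃ B : Matrix (Fin K) (Fin K) ℝ,
      (∀ k i : Fin K, (∀ t : ℕ, t < r → (i : ℕ) ≠ ((k : ℕ) + t) % K) → B k i = 0) ∧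
      (∀ W : Finset (Fin K), W.card = K - r + 1 →
        (fun _ : Fin K => (1 : ℝ)) ∈
          Submodule.span ℝ ((fun k : Fin K => B k) '' (W : Set (Fin K)))) := by
  let Z : Fin K → Finset ℝ := fun i => (Ico r K).image fun a => (((i + K - a) % K : ℕ) : ℝ)
  have hKZ : ∀ i, (K : ℝ) ∉ Z i := by
    intro i hK
    obtain ⟨a, -, ha⟩ := mem_image.mp hK
    exact (Nat.mod_lt _ i.pos).ne (Nat.cast_injective ha)
  choose P hPdeg hPzero hPone using fun i => Lagrange.exists_eval_eq_zero_eval_eq_one (Z i) (hKZ i)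
  refine ⟨fun k i => (P i).eval ((k : ℕ) : ℝ), fun k i hki => ?_, fun W hW => ?_⟩
  · obtain ⟨a, ha, hak⟩ := Nat.exists_mem_Ico_sub_mod_eq k.isLt i.isLt hki
    exact hPzero i _ (mem_image.mpr ⟨a, ha, by rw [hak]⟩)
  · refine one_mem_span_eval_rows (fun k _ l _ hkl => Fin.ext (Nat.cast_injective hkl))
      (fun i => (hPdeg i).trans_lt ?_) hPone
    have hZ : #(Z i) ≤ K - r := card_image_le.trans (Nat.card_Ico r K).le
    rw [hW]
    exact_mod_cast Nat.lt_succ_of_le hZ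

/-- existence of a gradient code. For `1 ≤ r ≤ K` there is a real
`K × K` encoding matrix `B` whose row `k` is supported on the `r` cyclically
consecutive columns `{k, k+1, …, k+r−1} (mod K)`, and such that for every set
`W` of `K − r + 1` row indices the all-ones vector lies in the span of the rows
of `B` indexed by `W`. -/
theorem stmt_2 (K r : ℕ) (hr : 1 ≤ r) (hrK : r ≤ K) :
    ∃ B : Matrix (Fin K) (Fin K) ℝ,
      (∀ k i : Fin K, (∀ t : ℕ, t < r → (i : ℕ) ≠ ((k : ℕ) + t) % K) → B k i = 0) ∧
      (∀ W : Finset (Fin K), W.card = K - r + 1 →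
        (fun _ : Fin K => (1 : ℝ)) ∈
          Submodule.span ℝ ((fun k : Fin K => B k) '' (W : Set (Fin K)))) :=
  stmt_2_general K r
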